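/- There exists a constant c > 0 such that for all ϱ > 0 with ϱ ∉ [ϱ̄/2, 2ϱ̄], P(ϱ) − P(ϱ̄) − P′(ϱ̄)(ϱ − ϱ̄) ≥ c (1 + ϱ^γ), where P is the pressure potential of p(ϱ) = a ϱ^γ with a > 0, γ > 1, ϱ̄ > 0. -/
import Mathlib


open intervalIntegral Set

open Real

private lemma aux_H_anti {γ : ℝ} (hγ : 1 < γ) :
    StrictAntiOn (fun t : ℝ => t ^ γ - γ * t + (γ - 1)) (Icc 0 1) := by
  apply strictAntiOn_of_deriv_neg (convex_Icc 0 1)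
  · apply ContinuousOn.add
    · exact ContinuousOn.sub
        (fun x _ => (Real.continuousAt_rpow_const x γ (Or.inr (by linarith))).continuousWithinAt)
        (continuous_const.mul continuous_id).continuousOn
    · exact continuousOn_const
  · intro x hx
    rw [interior_Icc] at hx
    have hd : HasDerivAt (fun t : ℝ => t ^ γ - γ * t + (γ - 1))
        (γ * x ^ (γ - 1) - γ * 1) x := by
      exact ((Real.hasDerivAt_rpow_const (Or.inl hx.1.ne')).sub
        ((hasDerivAt_id x).const_mul γ)).add_const _
    rw [hd.deriv]
    have : x ^ (γ - 1) < 1 := Real.rpow_lt_one hx.1.le hx.2 (by linarith)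
    nlinarith [hd.deriv]

private lemma aux_k_mono {γ : ℝ} (hγ : 1 < γ) :
    StrictMonoOn (fun t : ℝ => 1 - γ * t ^ (1 - γ) + (γ - 1) * t ^ (-γ)) (Ici 1) := by
  apply strictMonoOn_of_deriv_pos (convex_Ici 1)
  · apply ContinuousOn.add
    · apply ContinuousOn.sub continuousOn_const
      exact continuousOn_const.mul
        (fun x hx => (Real.continuousAt_rpow_const x _ (Or.inl (by
          have : (1:ℝ) ≤ x := hx; positivity))).continuousWithinAt)
    · exact continuousOn_const.mul
        (fun x hx => (Real.continuousAt_rpow_const x _ (Or.inl (by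
          have : (1:ℝ) ≤ x := hx; positivity))).continuousWithinAt)
  · intro x hx
    rw [interior_Ici] at hx
    have hx0 : (0:ℝ) < x := by linarith [mem_Ioi.mp hx]
    have hx1 : (1:ℝ) < x := hx
    have hd : HasDerivAt (fun t : ℝ => 1 - γ * t ^ (1 - γ) + (γ - 1) * t ^ (-γ))
        (0 - γ * ((1 - γ) * x ^ (1 - γ - 1)) + (γ - 1) * (-γ * x ^ (-γ - 1))) x := by
      have h1 : HasDerivAt (fun t : ℝ => t ^ (1 - γ)) ((1 - γ) * x ^ (1 - γ - 1)) x :=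
        Real.hasDerivAt_rpow_const (Or.inl hx0.ne')
      have h2 : HasDerivAt (fun t : ℝ => t ^ (-γ)) (-γ * x ^ (-γ - 1)) x :=
        Real.hasDerivAt_rpow_const (Or.inl hx0.ne')
      exact ((hasDerivAt_const x (1:ℝ)).sub (h1.const_mul γ)).add (h2.const_mul (γ - 1))
    rw [hd.deriv]
    have key : x ^ (-γ - 1) < x ^ (1 - γ - 1) :=
      Real.rpow_lt_rpow_of_exponent_lt hx1 (by linarith)
    have hγ0 : (0:ℝ) < γ * (γ - 1) := by nlinarith
    nlinarith [mul_lt_mul_of_pos_left key hγ0]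

private lemma aux_integral {a γ ϱbar : ℝ} (hγ : 1 < γ) (hϱbar : 0 < ϱbar)
    {x : ℝ} (hx : 0 < x) :
    ∫ z in ϱbar..x, (a * z ^ γ) / z ^ 2
      = a * (x ^ (γ - 1) - ϱbar ^ (γ - 1)) / (γ - 1) := by
  have hcong : ∀ z ∈ uIcc ϱbar x, (a * z ^ γ) / z ^ 2 = a * z ^ (γ - 2) := by
    intro z hz
    have hz0 : 0 < z := lt_of_lt_of_le (lt_min hϱbar hx) hz.1
    have h2 : (z:ℝ) ^ (2:ℕ) = z ^ ((2:ℕ):ℝ) := (Real.rpow_natCast z 2).symm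
    rw [h2, mul_div_assoc, ← Real.rpow_sub hz0]
    norm_num
  rw [integral_congr hcong, intervalIntegral.integral_const_mul,
    integral_rpow (Or.inl (by linarith : (-1:ℝ) < γ - 2))]
  have : γ - 2 + 1 = γ - 1 := by ring
  rw [this, mul_div_assoc]

/-- Residual coercivity: there is `c > 0` such that for all `ϱ > 0` with
`ϱ ∉ [ϱ̄/2, 2ϱ̄]`, `P(ϱ) − P(ϱ̄) − P′(ϱ̄)(ϱ − ϱ̄) ≥ c (1 + ϱ^γ)`, with `P` the pressure
potential of `p(ϱ) = a ϱ^γ`. -/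
theorem relative_pressure_potential_residual_coercivity
    (a γ ϱbar : ℝ) (ha : 0 < a) (hγ : 1 < γ) (hϱbar : 0 < ϱbar)
    (p : ℝ → ℝ) (hp : ∀ ϱ : ℝ, p ϱ = a * ϱ ^ γ)
    (P : ℝ → ℝ)
    (hP : ∀ ϱ : ℝ, P ϱ = ϱ * ∫ z in ϱbar..ϱ, p z / z ^ 2) :
    ∃ c > (0:ℝ), ∀ ϱ > (0:ℝ), ϱ ∉ Set.Icc (ϱbar / 2) (2 * ϱbar) →
      c * (1 + ϱ ^ γ) ≤ P ϱ - P ϱbar - deriv P ϱbar * (ϱ - ϱbar) := by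
  have hγ1 : (0:ℝ) < γ - 1 := by linarith
  -- value of P on positive reals
  have hPval : ∀ x : ℝ, 0 < x → P x = a / (γ - 1) * (x ^ γ - ϱbar ^ (γ - 1) * x) := by
    intro x hx
    have hint : ∫ z in ϱbar..x, p z / z ^ 2
        = a * (x ^ (γ - 1) - ϱbar ^ (γ - 1)) / (γ - 1) := by
      have h0 := aux_integral (a := a) hγ hϱbar hx
      rw [← h0]
      exact integral_congr fun z _ => by rw [hp]
    rw [hP, hint]
    have hxx : x * x ^ (γ - 1) = x ^ γ := by
      rw [← Real.rpow_one_add' hx.le (by linarith)]; ring_nf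
    field_simp
    nlinarith [hxx]
  -- derivative of P at ϱbar
  have hderiv : deriv P ϱbar = a * ϱbar ^ (γ - 1) := by
    have hev : P =ᶠ[nhds ϱbar] fun x => a / (γ - 1) * (x ^ γ - ϱbar ^ (γ - 1) * x) := by
      filter_upwards [isOpen_Ioi.mem_nhds (mem_Ioi.mpr hϱbar)] with x hx
      exact hPval x hx
    rw [hev.deriv_eq]
    have hd : HasDerivAt (fun x : ℝ => a / (γ - 1) * (x ^ γ - ϱbar ^ (γ - 1) * x))
        (a / (γ - 1) * (γ * ϱbar ^ (γ - 1) - ϱbar ^ (γ - 1) * 1)) ϱbar :=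
      ((Real.hasDerivAt_rpow_const (Or.inl hϱbar.ne')).sub
        ((hasDerivAt_id ϱbar).const_mul _)).const_mul _
    rw [hd.deriv]
    field_simp
  -- the residual identity
  have hres : ∀ ϱ : ℝ, 0 < ϱ →
      P ϱ - P ϱbar - deriv P ϱbar * (ϱ - ϱbar)
        = (a * ϱbar ^ γ / (γ - 1)) *
          ((ϱ / ϱbar) ^ γ - γ * (ϱ / ϱbar) + (γ - 1)) := by
    intro ϱ hϱ
    rw [hPval ϱ hϱ, hPval ϱbar hϱbar, hderiv]
    have htγ : (ϱ / ϱbar) ^ γ = ϱ ^ γ / ϱbar ^ γ := Real.div_rpow hϱ.le hϱbar.le γ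
    have hb : ϱbar ^ γ = ϱbar ^ (γ - 1) * ϱbar := by
      have h := Real.rpow_add hϱbar (γ - 1) 1
      rw [Real.rpow_one, show γ - 1 + 1 = γ by ring] at h
      exact h
    rw [htγ, hb]
    have h1 : (γ:ℝ) - 1 ≠ 0 := by linarith
    have h2 : ϱbar ≠ 0 := hϱbar.ne'
    have h3 : ϱbar ^ (γ - 1) ≠ 0 := (Real.rpow_pos_of_pos hϱbar _).ne'
    field_simp
    ring
  -- endgame: coercivity of H(t) = t^γ - γ t + (γ-1)
  set A := a * ϱbar ^ γ / (γ - 1) with hAdef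
  have hA : 0 < A := by
    have := Real.rpow_pos_of_pos hϱbar γ
    positivity
  set H : ℝ → ℝ := fun t => t ^ γ - γ * t + (γ - 1) with hHdef
  have hH1 : H 1 = 0 := by simp [hHdef]
  have hHhalf : 0 < H (1/2) := by
    have := aux_H_anti hγ (show (1:ℝ)/2 ∈ Icc (0:ℝ) 1 by constructor <;> norm_num)
      (show (1:ℝ) ∈ Icc (0:ℝ) 1 by constructor <;> norm_num) (by norm_num)
    have h' : H 1 < H (1/2) := this
    rwa [hH1] at h'
  have hkeq : ∀ t : ℝ, 0 < t →
      1 - γ * t ^ (1 - γ) + (γ - 1) * t ^ (-γ) = H t / t ^ γ := by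
    intro t ht
    have h1 : t ^ (1 - γ) = t / t ^ γ := by
      rw [Real.rpow_sub ht, Real.rpow_one]
    have h2 : t ^ (-γ) = 1 / t ^ γ := by
      rw [Real.rpow_neg ht.le, one_div]
    have h3 : t ^ γ ≠ 0 := (Real.rpow_pos_of_pos ht γ).ne'
    rw [h1, h2, hHdef]
    field_simp
  have hκpos : 0 < H 2 / 2 ^ γ := by
    have hm := aux_k_mono hγ (show (1:ℝ) ∈ Ici (1:ℝ) from Set.mem_Ici.mpr (le_refl 1))
      (show (2:ℝ) ∈ Ici (1:ℝ) by norm_num) (by norm_num)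
    have hm' : 1 - γ * (1:ℝ) ^ (1-γ) + (γ-1) * (1:ℝ) ^ (-γ)
        < 1 - γ * (2:ℝ) ^ (1-γ) + (γ-1) * (2:ℝ) ^ (-γ) := hm
    simp only [Real.one_rpow] at hm'
    rw [hkeq 2 (by norm_num)] at hm'
    have : 1 - γ * 1 + (γ - 1) * 1 = 0 := by ring
    calc (0:ℝ) = 1 - γ * 1 + (γ - 1) * 1 := this.symm
      _ < H 2 / 2 ^ γ := hm'
  set κ := H 2 / 2 ^ γ with hκ
  set M := max 1 (ϱbar ^ γ) with hM
  have hM1 : (1:ℝ) ≤ M := le_max_left _ _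
  have hM2 : ϱbar ^ γ ≤ M := le_max_right _ _
  have hMpos : 0 < M := lt_of_lt_of_le one_pos hM1
  set c₁ := A * H (1/2) / (1 + (ϱbar/2) ^ γ) with hc₁
  set c₂ := A * κ / (2 * M) with hc₂
  have hd1 : (0:ℝ) < 1 + (ϱbar/2) ^ γ := by positivity
  have hc₁pos : 0 < c₁ := div_pos (mul_pos hA hHhalf) hd1
  have hc₂pos : 0 < c₂ := div_pos (mul_pos hA hκpos) (by positivity)
  refine ⟨min c₁ c₂, lt_min hc₁pos hc₂pos, ?_⟩
  intro ϱ hϱ hm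
  rw [hres ϱ hϱ]
  set t := ϱ / ϱbar with htdef
  have ht : 0 < t := div_pos hϱ hϱbar
  have htγpos : 0 < t ^ γ := Real.rpow_pos_of_pos ht γ
  have hϱγ : ϱ ^ γ = ϱbar ^ γ * t ^ γ := by
    rw [htdef, Real.div_rpow hϱ.le hϱbar.le]
    field_simp
  have hcase : ϱ < ϱbar / 2 ∨ 2 * ϱbar < ϱ := by
    by_contra hcon
    push_neg at hcon
    exact hm ⟨hcon.1, hcon.2⟩
  show min c₁ c₂ * (1 + ϱ ^ γ) ≤ A * H t
  rcases hcase with h | h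
  · -- small case : ϱ < ϱbar / 2
    have ht2 : t < 1/2 := by
      rw [htdef, div_lt_iff₀ hϱbar]; linarith
    have hHt : H (1/2) ≤ H t :=
      (aux_H_anti hγ ⟨ht.le, by linarith⟩
        (show (1:ℝ)/2 ∈ Icc (0:ℝ) 1 by constructor <;> norm_num) ht2).le
    have hϱb : ϱ ^ γ ≤ (ϱbar/2) ^ γ := Real.rpow_le_rpow hϱ.le h.le (by linarith)
    calc min c₁ c₂ * (1 + ϱ ^ γ) ≤ c₁ * (1 + (ϱbar/2) ^ γ) := by
          apply mul_le_mul (min_le_left _ _) (by linarith) (by positivity) hc₁pos.le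
      _ = A * H (1/2) := div_mul_cancel₀ _ hd1.ne'
      _ ≤ A * H t := mul_le_mul_of_nonneg_left hHt hA.le
  · -- large case : 2 * ϱbar < ϱ
    have ht2 : 2 < t := by
      rw [htdef, lt_div_iff₀ hϱbar]; linarith
    have hkm := (aux_k_mono hγ (show (2:ℝ) ∈ Ici (1:ℝ) by norm_num)
      (show t ∈ Ici (1:ℝ) by simp only [Set.mem_Ici]; linarith) ht2).le
    have hkm' : 1 - γ * (2:ℝ) ^ (1-γ) + (γ-1) * (2:ℝ) ^ (-γ)
        ≤ 1 - γ * t ^ (1-γ) + (γ-1) * t ^ (-γ) := hkm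
    rw [hkeq 2 (by norm_num), hkeq t ht] at hkm'
    have hHt : κ * t ^ γ ≤ H t := by
      rw [hκ]
      calc H 2 / 2 ^ γ * t ^ γ ≤ H t / t ^ γ * t ^ γ := by
            apply mul_le_mul_of_nonneg_right hkm' htγpos.le
        _ = H t := div_mul_cancel₀ _ htγpos.ne'
    have h2γ : (1:ℝ) ≤ 2 ^ γ := Real.one_le_rpow (by norm_num) (by linarith)
    have htg1 : (2:ℝ) ^ γ ≤ t ^ γ := Real.rpow_le_rpow (by norm_num) ht2.le (by linarith)
    have htgeorge : (1:ℝ) ≤ t ^ γ := le_trans h2γ htg1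
    calc min c₁ c₂ * (1 + ϱ ^ γ) ≤ c₂ * (M * (1 + t ^ γ)) := by
          apply mul_le_mul (min_le_right _ _) ?_ (by positivity) hc₂pos.le
          rw [hϱγ]; nlinarith
      _ = A * κ / 2 * (1 + t ^ γ) := by
          rw [hc₂]; field_simp
      _ ≤ A * (κ * t ^ γ) := by
          have h1t : 1 + t ^ γ ≤ 2 * t ^ γ := by linarith
          calc A * κ / 2 * (1 + t ^ γ) ≤ A * κ / 2 * (2 * t ^ γ) := by
                apply mul_le_mul_of_nonneg_left h1t
                positivity
            _ = A * (κ * t ^ γ) := by ring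
      _ ≤ A * H t := mul_le_mul_of_nonneg_left hHt hA.le
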